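/- arXiv:1302.1031 — 3 statements merged into one kernel-verified Lean document; each statement's English description precedes it below -/
import Mathlib

section
/- Let n, p, q be positive integers with 2n ≤ p and 2n ≤ q. Suppose A, A' are complex p×n matrices of rank n and B, B' are complex q×n matrices of rank n, and suppose A·Bᵀ = A'·B'ᵀ. Then there exists a unique invertible n×n complex matrix g such that A' = A·g and B' = B·(g⁻¹)ᵀ. (Thus the fiber of φ' over a full-rank point is a single orbit of GL(n,ℂ) on which GL(n,ℂ) acts freely.) -/
open Matrix

namespace Matrix

variable {K R m m' n : Type*} [Fintype m] [Fintype m'] [Fintype n] [DecidableEq n]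

theorem exists_mul_eq_one_of_rank_eq_card [Field K] (A : Matrix m n K)
    (hA : A.rank = Fintype.card n) : ∃ L : Matrix n m K, L * A = 1 := by
  refine vecMul_surjective_iff_exists_left_inverse.mp fun y => ?_
  have hrange : LinearMap.range Aᵀ.mulVecLin = ⊤ :=
    Submodule.eq_top_of_finrank_eq <| by
      rw [Module.finrank_fintype_fun_eq_card]
      exact (rank_transpose A).trans hA
  obtain ⟨x, hx⟩ := LinearMap.range_eq_top.mp hrange y
  exact ⟨x, (mulVec_transpose A x).symm.trans hx⟩

/-- If `LA * A = 1` and `LB * B = 1`, the two factorizations `A * Bᵀ = A' * B'ᵀ` are related by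
`g = LA * A'`, whose inverse is `B'ᵀ * LBᵀ`. -/
theorem existsUnique_isUnit_of_mul_transpose_eq [CommRing R]
    {A A' : Matrix m n R} {B B' : Matrix m' n R} {LA : Matrix n m R} {LB : Matrix n m' R}
    (hA : LA * A = 1) (hB : LB * B = 1) (h : A * Bᵀ = A' * B'ᵀ) :
    ∃! g : Matrix n n R, IsUnit g ∧ A' = A * g ∧ B' = B * (g⁻¹)ᵀ := by
  set g := LA * A'
  set k := B'ᵀ * LBᵀ
  have hAk : A = A' * k :=
    calc A = A * Bᵀ * LBᵀ := by
          rw [Matrix.mul_assoc, ← transpose_mul, hB, transpose_one, Matrix.mul_one]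
      _ = A' * k := by rw [h, Matrix.mul_assoc]
  have hgk : g * k = 1 := by rw [Matrix.mul_assoc, ← hAk, hA]
  have hkg : k * g = 1 := mul_eq_one_comm.mp hgk
  have hAg : A' = A * g := by rw [hAk, Matrix.mul_assoc, hkg, Matrix.mul_one]
  have hBg : Bᵀ = g * B'ᵀ := by
    rw [Matrix.mul_assoc, ← h, ← Matrix.mul_assoc, hA, Matrix.one_mul]
  refine ⟨g, ⟨IsUnit.of_mul_eq_one k hgk, hAg, ?_⟩, ?_⟩
  · rw [inv_eq_right_inv hgk, ← transpose_transpose B', ← Matrix.one_mul B'ᵀ, ← hkg,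
      Matrix.mul_assoc, ← hBg, transpose_mul, transpose_transpose]
  · rintro g' ⟨-, hAg', -⟩
    exact mul_right_injective_of_inv LA A hA (hAg'.symm.trans hAg)

end Matrix

theorem stmt_1_general (n p q : ℕ)
    (A A' : Matrix (Fin p) (Fin n) ℂ) (B B' : Matrix (Fin q) (Fin n) ℂ)
    (hA : A.rank = n) (hB : B.rank = n)
    (h : A * Bᵀ = A' * B'ᵀ) :
    ∃! g : Matrix (Fin n) (Fin n) ℂ,
      IsUnit g ∧ A' = A * g ∧ B' = B * (g⁻¹)ᵀ := by
  obtain ⟨LA, hLA⟩ := exists_mul_eq_one_of_rank_eq_card A (by rwa [Fintype.card_fin])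
  obtain ⟨LB, hLB⟩ := exists_mul_eq_one_of_rank_eq_card B (by rwa [Fintype.card_fin])
  exact existsUnique_isUnit_of_mul_transpose_eq hLA hLB h

/-- Lemma B.2(ii) for the dual pair (Sp(2n,ℝ), O(p,q)):
the fiber of φ'(A,B) = A·Bᵀ over a full-rank point is a single free
orbit of K_ℂ = GL(n,ℂ), acting by g·(A,B) = (A·g, B·(g⁻¹)ᵀ). -/
theorem stmt_1 (n p q : ℕ) (hn : 0 < n) (hp : 0 < p) (hq : 0 < q)
    (hnp : 2 * n ≤ p) (hnq : 2 * n ≤ q)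
    (A A' : Matrix (Fin p) (Fin n) ℂ) (B B' : Matrix (Fin q) (Fin n) ℂ)
    (hA : A.rank = n) (hA' : A'.rank = n) (hB : B.rank = n) (hB' : B'.rank = n)
    (h : A * Bᵀ = A' * B'ᵀ) :
    ∃! g : Matrix (Fin n) (Fin n) ℂ,
      IsUnit g ∧ A' = A * g ∧ B' = B * (g⁻¹)ᵀ :=
  stmt_1_general n p q A A' B B' hA hB h
end

section
/- Let n, p, q be positive integers with 2n ≤ p and 2n ≤ q, and fix a complex p×n matrix A of rank n and a complex q×n matrix B of rank n. For every pair (o, o') with oᵀ·o = I_p, o'ᵀ·o' = I_q and o·(A·Bᵀ)·o'ᵀ = A·Bᵀ, there exists a unique invertible n×n complex matrix α(o,o') such that o·A = A·α(o,o') and o'·B = B·(α(o,o')⁻¹)ᵀ. Moreover the resulting map α is a group homomorphism from the stabilizer of A·Bᵀ in O(p,ℂ) × O(q,ℂ) to GL(n,ℂ), and its values stabilize (AᵀA, BᵀB), i.e. α(o,o')ᵀ·(AᵀA)·α(o,o') = AᵀA and α(o,o')⁻¹·(BᵀB)·(α(o,o')⁻¹)ᵀ = BᵀB. -/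
open Matrix Module


variable {p n m : ℕ}

lemma mulVec_inj (A : Matrix (Fin p) (Fin n) ℂ) (hA : A.rank = n) :
    Function.Injective A.mulVec := by
  rw [← coe_mulVecLin]
  rw [← LinearMap.ker_eq_bot]
  have h := LinearMap.finrank_range_add_finrank_ker A.mulVecLin
  rw [show finrank ℂ ↥(LinearMap.range A.mulVecLin) = n from hA] at h
  simp only [Module.finrank_pi, Fintype.card_fin] at h
  have : finrank ℂ (LinearMap.ker A.mulVecLin) = 0 := by omega
  exact Submodule.finrank_eq_zero.mp this

lemma cancelA (A : Matrix (Fin p) (Fin n) ℂ) (hA : A.rank = n)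
    {X Y : Matrix (Fin n) (Fin m) ℂ} (h : A * X = A * Y) : X = Y := by
  have hinj := mulVec_inj A hA
  ext i j
  have : A.mulVec (fun k => X k j) = A.mulVec (fun k => Y k j) := by
    funext r
    have := congrFun (congrFun h r) j
    simpa [mulVec, dotProduct, mul_apply] using this
  exact congrFun (hinj this) i

lemma rightInv (B : Matrix (Fin p) (Fin n) ℂ) (hB : B.rank = n) :
    ∃ C : Matrix (Fin p) (Fin n) ℂ, Bᵀ * C = 1 := by
  have hr : Bᵀ.rank = n := by rw [rank_transpose]; exact hB
  have hsurj : Function.Surjective Bᵀ.mulVec := by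
    rw [← coe_mulVecLin, ← LinearMap.range_eq_top]
    apply Submodule.eq_top_of_finrank_eq
    rw [show finrank ℂ ↥(LinearMap.range Bᵀ.mulVecLin) = n from hr]
    simp
  choose c hc using fun j => hsurj (Pi.single j 1)
  refine ⟨Matrix.of (fun i j => c j i), ?_⟩
  ext i j
  have := congrFun (hc j) i
  simpa [mulVec, dotProduct, mul_apply, Matrix.one_apply, Pi.single_apply, eq_comm] using this


/-- Corollary B.4(ii) for the dual pair (Sp(2n,ℝ), O(p,q)):
construction of the group homomorphism α from the stabilizer of
x' = A·Bᵀ in K'_ℂ = O(p,ℂ) × O(q,ℂ) to the stabilizer of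
x = (AᵀA, BᵀB) in K_ℂ = GL(n,ℂ).  For each (o,o') stabilizing A·Bᵀ
there is a unique invertible g = α(o,o') with o·A = A·g and
o'·B = B·(g⁻¹)ᵀ, its value stabilizes (AᵀA, BᵀB), and the assignment
(o,o') ↦ α(o,o') is multiplicative (a group homomorphism). -/
theorem stmt_4 (n p q : ℕ) (hn : 0 < n) (hp : 0 < p) (hq : 0 < q)
    (hnp : 2 * n ≤ p) (hnq : 2 * n ≤ q)
    (A : Matrix (Fin p) (Fin n) ℂ) (B : Matrix (Fin q) (Fin n) ℂ)
    (hA : A.rank = n) (hB : B.rank = n) :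
    (∀ (o : Matrix (Fin p) (Fin p) ℂ) (o' : Matrix (Fin q) (Fin q) ℂ),
      oᵀ * o = 1 → o'ᵀ * o' = 1 → o * (A * Bᵀ) * o'ᵀ = A * Bᵀ →
      ∃! g : Matrix (Fin n) (Fin n) ℂ,
        IsUnit g ∧ o * A = A * g ∧ o' * B = B * (g⁻¹)ᵀ ∧
        gᵀ * (Aᵀ * A) * g = Aᵀ * A ∧ g⁻¹ * (Bᵀ * B) * (g⁻¹)ᵀ = Bᵀ * B)
    ∧
    (∀ (o₁ o₂ : Matrix (Fin p) (Fin p) ℂ) (o₁' o₂' : Matrix (Fin q) (Fin q) ℂ)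
       (g₁ g₂ : Matrix (Fin n) (Fin n) ℂ),
      o₁ᵀ * o₁ = 1 → o₁'ᵀ * o₁' = 1 → o₁ * (A * Bᵀ) * o₁'ᵀ = A * Bᵀ →
      o₂ᵀ * o₂ = 1 → o₂'ᵀ * o₂' = 1 → o₂ * (A * Bᵀ) * o₂'ᵀ = A * Bᵀ →
      IsUnit g₁ → o₁ * A = A * g₁ → o₁' * B = B * (g₁⁻¹)ᵀ →
      IsUnit g₂ → o₂ * A = A * g₂ → o₂' * B = B * (g₂⁻¹)ᵀ →
      (o₁ * o₂) * A = A * (g₁ * g₂) ∧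
      (o₁' * o₂') * B = B * (((g₁ * g₂)⁻¹)ᵀ)) := by
  obtain ⟨C, hC⟩ := rightInv B hB
  constructor
  · intro o o' ho ho' hst
    -- key: o * A * Bᵀ = A * Bᵀ * o'
    have key1 : o * A * Bᵀ = A * Bᵀ * o' := by
      have := congrArg (· * o') hst
      simpa [Matrix.mul_assoc, ho'] using this
    set g : Matrix (Fin n) (Fin n) ℂ := Bᵀ * o' * C with hg
    have hoA : o * A = A * g := by
      calc o * A = o * A * (Bᵀ * C) := by rw [hC, Matrix.mul_one]
        _ = (o * A * Bᵀ) * C := by simp only [Matrix.mul_assoc]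
        _ = A * (Bᵀ * o' * C) := by rw [key1]; simp [Matrix.mul_assoc]
    -- g * (Bᵀ * o'ᵀ) = Bᵀ
    have key2 : g * (Bᵀ * o'ᵀ) = Bᵀ := by
      apply cancelA A hA
      have : A * g * (Bᵀ * o'ᵀ) = A * Bᵀ := by
        rw [← hoA]
        calc o * A * (Bᵀ * o'ᵀ) = o * (A * Bᵀ) * o'ᵀ := by simp [Matrix.mul_assoc]
          _ = A * Bᵀ := hst
      simpa [Matrix.mul_assoc] using this
    have hginv : g * (Bᵀ * o'ᵀ * C) = 1 := by
      calc g * (Bᵀ * o'ᵀ * C) = (g * (Bᵀ * o'ᵀ)) * C := by simp [Matrix.mul_assoc]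
        _ = Bᵀ * C := by rw [key2]
        _ = 1 := hC
    have hu : IsUnit g := @isUnit_of_invertible _ _ g (invertibleOfRightInverse g _ hginv)
    have hgi : g⁻¹ * g = 1 := nonsing_inv_mul g (isUnit_iff_isUnit_det g |>.mp hu)
    have hggi : g * g⁻¹ = 1 := mul_nonsing_inv g (isUnit_iff_isUnit_det g |>.mp hu)
    have key3 : Bᵀ * o'ᵀ = g⁻¹ * Bᵀ := by
      calc Bᵀ * o'ᵀ = (g⁻¹ * g) * (Bᵀ * o'ᵀ) := by rw [hgi, Matrix.one_mul]
        _ = g⁻¹ * (g * (Bᵀ * o'ᵀ)) := by simp [Matrix.mul_assoc]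
        _ = g⁻¹ * Bᵀ := by rw [key2]
    have hoB : o' * B = B * (g⁻¹)ᵀ := by
      have := congrArg Matrix.transpose key3
      simpa [Matrix.transpose_mul] using this
    have hstab1 : gᵀ * (Aᵀ * A) * g = Aᵀ * A := by
      calc gᵀ * (Aᵀ * A) * g = (A * g)ᵀ * (A * g) := by
            simp [Matrix.transpose_mul, Matrix.mul_assoc]
        _ = (o * A)ᵀ * (o * A) := by rw [hoA]
        _ = Aᵀ * (oᵀ * o) * A := by simp [Matrix.transpose_mul, Matrix.mul_assoc]
        _ = Aᵀ * A := by rw [ho, Matrix.mul_one]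
    have hstab2 : g⁻¹ * (Bᵀ * B) * (g⁻¹)ᵀ = Bᵀ * B := by
      calc g⁻¹ * (Bᵀ * B) * (g⁻¹)ᵀ = (B * (g⁻¹)ᵀ)ᵀ * (B * (g⁻¹)ᵀ) := by
            simp [Matrix.transpose_mul, Matrix.mul_assoc]
        _ = (o' * B)ᵀ * (o' * B) := by rw [hoB]
        _ = Bᵀ * (o'ᵀ * o') * B := by simp [Matrix.transpose_mul, Matrix.mul_assoc]
        _ = Bᵀ * B := by rw [ho', Matrix.mul_one]
    refine ⟨g, ⟨hu, hoA, hoB, hstab1, hstab2⟩, ?_⟩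
    rintro y ⟨-, hy, -, -, -⟩
    exact cancelA A hA (by rw [← hy, ← hoA])
  · intro o₁ o₂ o₁' o₂' g₁ g₂ _ _ _ _ _ _ hu₁ h₁ h₁' hu₂ h₂ h₂'
    constructor
    · calc o₁ * o₂ * A = o₁ * (A * g₂) := by rw [Matrix.mul_assoc, h₂]
        _ = (o₁ * A) * g₂ := by rw [Matrix.mul_assoc]
        _ = A * (g₁ * g₂) := by rw [h₁, Matrix.mul_assoc]
    · calc o₁' * o₂' * B = o₁' * (B * (g₂⁻¹)ᵀ) := by rw [Matrix.mul_assoc, h₂']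
        _ = (o₁' * B) * (g₂⁻¹)ᵀ := by rw [Matrix.mul_assoc]
        _ = B * ((g₁⁻¹)ᵀ * (g₂⁻¹)ᵀ) := by rw [h₁', Matrix.mul_assoc]
        _ = B * ((g₂⁻¹ * g₁⁻¹)ᵀ) := by rw [Matrix.transpose_mul]
        _ = B * (((g₁ * g₂)⁻¹)ᵀ) := by rw [Matrix.mul_inv_rev]
end

section
/- Let n₁, n₂, p be positive integers with n₁ + n₂ ≤ p. Suppose A, A' ∈ M_{p,n₁}(ℂ) have rank n₁, B, B' ∈ M_{p,n₂}(ℂ) have rank n₂, and AᵀB = A'ᵀB'. Then there exists an invertible p×p complex matrix u such that A' = u·A and B' = (u⁻¹)ᵀ·B. -/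
/-!
View `A` and `Bᵀ` as linear maps `a : ℂ^n₁ → ℂ^p` and `β : ℂ^p → ℂ^n₂`; we need `e ∈ GL(ℂ^p)` with
`e ∘ a = a'` and `β' ∘ e = β`. Since `β ∘ a = β' ∘ a'`, both `a` and `a'` map the subspace
`ker (β ∘ a)` injectively, into `ker β` and `ker β'` respectively; as `ker β` and `ker β'` have
the same dimension, this partial identification extends to an isomorphism `k : ker β ≃ ker β'`.
Now `e` is forced on `range a + ker β` (by `a x + y ↦ a' x + k y`), and on a complement of that
subspace we take `s' ∘ β` for a section `s'` of `β'`. The result is injective because `ker β`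
lies in the part where `e` was prescribed.
-/

open Matrix Function Module

namespace LinearMap

section Ring

variable {R P V V' : Type*} [Ring R] [AddCommGroup P] [Module R P]
  [AddCommGroup V] [Module R V] [AddCommGroup V'] [Module R V']

noncomputable def rangeEquivOfKerEq (σ : P →ₗ[R] V) (σ' : P →ₗ[R] V') (h : ker σ = ker σ') :
    range σ ≃ₗ[R] range σ' :=
  σ.quotKerEquivRange.symm ≪≫ₗ Submodule.quotEquivOfEq _ _ h ≪≫ₗ σ'.quotKerEquivRange

theorem rangeEquivOfKerEq_apply {σ : P →ₗ[R] V} {σ' : P →ₗ[R] V'} (h : ker σ = ker σ') (p : P) :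
    (rangeEquivOfKerEq σ σ' h ⟨σ p, mem_range_self σ p⟩ : V') = σ' p := by
  simp [rangeEquivOfKerEq, quotKerEquivRange_symm_apply_image]

end Ring

variable {K P V V' W : Type*} [Field K] [AddCommGroup P] [Module K P]
  [AddCommGroup V] [Module K V] [AddCommGroup V'] [Module K V'] [AddCommGroup W] [Module K W]

theorem exists_linearEquiv_comp_eq_of_ker_eq [FiniteDimensional K V] [FiniteDimensional K V']
    (hV : finrank K V = finrank K V') {σ : P →ₗ[K] V} {σ' : P →ₗ[K] V'} (h : ker σ = ker σ') :
    ∃ e : V ≃ₗ[K] V', e.toLinearMap ∘ₗ σ = σ' := by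
  obtain ⟨T, hT⟩ := (range σ).exists_isCompl
  obtain ⟨T', hT'⟩ := (range σ').exists_isCompl
  have hTT' : finrank K T = finrank K T' := by
    have := (rangeEquivOfKerEq σ σ' h).finrank_eq
    have := Submodule.finrank_add_eq_of_isCompl hT
    have := Submodule.finrank_add_eq_of_isCompl hT'
    omega
  refine ⟨(Submodule.prodEquivOfIsCompl _ _ hT).symm ≪≫ₗ
    (rangeEquivOfKerEq σ σ' h).prodCongr (LinearEquiv.ofFinrankEq T T' hTT') ≪≫ₗ
    Submodule.prodEquivOfIsCompl _ _ hT', ?_⟩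
  ext p
  have := Submodule.prodEquivOfIsCompl_symm_apply_left _ _ hT ⟨σ p, mem_range_self σ p⟩
  simp_all [rangeEquivOfKerEq_apply]

theorem exists_linearEquiv_comp_eq_of_ker_le_range [FiniteDimensional K V]
    {σ σ' : P →ₗ[K] V} {β β' : V →ₗ[K] W} (h : ker σ = ker σ') (hβ' : Surjective β')
    (hσ : β' ∘ₗ σ' = β ∘ₗ σ) (hkerβ : ker β ≤ range σ) :
    ∃ e : V ≃ₗ[K] V, e.toLinearMap ∘ₗ σ = σ' ∧ β' ∘ₗ e.toLinearMap = β := by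
  obtain ⟨T, hT⟩ := (range σ).exists_isCompl
  obtain ⟨s, hs⟩ := β'.exists_rightInverse_of_surjective (range_eq_top.2 hβ')
  set e : V →ₗ[K] V :=
    ofIsCompl hT ((range σ').subtype ∘ₗ (rangeEquivOfKerEq σ σ' h).toLinearMap)
      (s ∘ₗ β ∘ₗ T.subtype)
  have he : ∀ p, e (σ p) = σ' p := fun p =>
    (ofIsCompl_apply_left hT (F := V) ⟨σ p, mem_range_self σ p⟩).trans
      (rangeEquivOfKerEq_apply h p)
  have hβe : β' ∘ₗ e = β := by
    ext v
    obtain ⟨⟨_, p, rfl⟩, t, rfl, -⟩ := Submodule.existsUnique_add_of_isCompl hT v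
    rw [comp_apply, map_add, he]
    simpa [e] using congr($hσ p + $hs (β t))
  have hinj : Injective e := by
    rw [← ker_eq_bot, eq_bot_iff]
    intro v hv
    obtain ⟨p, rfl⟩ := hkerβ (by rw [mem_ker, ← hβe, comp_apply, hv, map_zero])
    rw [mem_ker, he, ← mem_ker, ← h, mem_ker] at hv
    exact hv
  exact ⟨LinearEquiv.ofInjectiveEndo e hinj, ext he, hβe⟩

theorem finrank_ker_eq_of_surjective [FiniteDimensional K V] {β β' : V →ₗ[K] W}
    (hβ : Surjective β) (hβ' : Surjective β') : finrank K (ker β) = finrank K (ker β') := by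
  have h₁ := β.finrank_range_add_finrank_ker
  have h₂ := β'.finrank_range_add_finrank_ker
  rw [range_eq_top.2 hβ, finrank_top] at h₁
  rw [range_eq_top.2 hβ', finrank_top] at h₂
  omega

theorem exists_linearEquiv_comp_eq_of_comp_eq [FiniteDimensional K V]
    {σ σ' : P →ₗ[K] V} {β β' : V →ₗ[K] W} (h : ker σ = ker σ') (hβ : Surjective β)
    (hβ' : Surjective β') (hσ : β' ∘ₗ σ' = β ∘ₗ σ) :
    ∃ e : V ≃ₗ[K] V, e.toLinearMap ∘ₗ σ = σ' ∧ β' ∘ₗ e.toLinearMap = β := by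
  have hσ'_mem : ∀ p ∈ (ker β).comap σ, σ' p ∈ ker β' := fun p hp => by
    simpa using congr($hσ p).trans hp
  obtain ⟨k, hk⟩ := exists_linearEquiv_comp_eq_of_ker_eq (finrank_ker_eq_of_surjective hβ hβ')
    (σ := σ.restrict fun _ => Submodule.mem_comap.1) (σ' := σ'.restrict hσ'_mem)
    (by rw [ker_restrict, ker_restrict, h])
  have hkσ : ∀ p (hp : β (σ p) = 0), (k ⟨σ p, hp⟩ : V) = σ' p := fun p hp =>
    congr(($hk ⟨p, hp⟩ : V))
  have hker : ker (σ.coprod (ker β).subtype) =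
      ker (σ'.coprod ((ker β').subtype ∘ₗ k.toLinearMap)) := by
    ext ⟨p, x⟩
    simp only [mem_ker, coprod_apply, Submodule.subtype_apply, comp_apply, LinearEquiv.coe_coe]
    constructor
    · intro hpx
      have hp : β (σ p) = 0 := by
        rw [eq_neg_of_add_eq_zero_left hpx, map_neg, mem_ker.1 x.2, neg_zero]
      have hx : x = -⟨σ p, hp⟩ := Subtype.ext (eq_neg_of_add_eq_zero_right hpx)
      rw [hx, map_neg, Submodule.coe_neg, hkσ, add_neg_cancel]
    · intro hpx
      have hp : β (σ p) = 0 := by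
        rw [← comp_apply β σ, ← hσ, comp_apply, eq_neg_of_add_eq_zero_left hpx, map_neg,
          mem_ker.1 (k x).2, neg_zero]
      have hkx : k (⟨σ p, hp⟩ + x) = 0 :=
        Subtype.ext (by rw [map_add, Submodule.coe_add, hkσ, hpx, Submodule.coe_zero])
      exact congr(($(k.map_eq_zero_iff.1 hkx) : V))
  have hβσ : β' ∘ₗ σ'.coprod ((ker β').subtype ∘ₗ k.toLinearMap) =
      β ∘ₗ σ.coprod (ker β).subtype := by
    rw [comp_coprod, comp_coprod, hσ]
    congr 1
    ext x
    simp
  obtain ⟨e, he, hβe⟩ := exists_linearEquiv_comp_eq_of_ker_le_range hker hβ' hβσ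
    fun x hx => ⟨(0, ⟨x, hx⟩), by simp⟩
  refine ⟨e, ?_, hβe⟩
  have := congr($he ∘ₗ inl K P (ker β))
  rwa [comp_assoc, coprod_inl, coprod_inl] at this

end LinearMap

namespace Matrix

variable {K m n : Type*} [Field K] [Fintype n]

theorem ker_mulVecLin_eq_bot_of_rank_eq (A : Matrix m n K) (h : A.rank = Fintype.card n) :
    LinearMap.ker A.mulVecLin = ⊥ := by
  have := A.mulVecLin.finrank_range_add_finrank_ker
  rw [Module.finrank_fintype_fun_eq_card] at this
  exact Submodule.finrank_eq_zero.1 (by rw [Matrix.rank] at h; omega)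

theorem mulVecLin_surjective_of_rank_eq [Fintype m] (A : Matrix m n K)
    (h : A.rank = Fintype.card m) : Surjective A.mulVecLin :=
  LinearMap.range_eq_top.1 <| Submodule.eq_top_of_finrank_eq <| by
    rw [Module.finrank_fintype_fun_eq_card]; exact h

end Matrix

theorem stmt_9_general (n₁ n₂ p : ℕ)
    (A A' : Matrix (Fin p) (Fin n₁) ℂ) (B B' : Matrix (Fin p) (Fin n₂) ℂ)
    (hA : A.rank = n₁) (hA' : A'.rank = n₁)
    (hB : B.rank = n₂) (hB' : B'.rank = n₂)
    (h : Aᵀ * B = A'ᵀ * B') :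
    ∃ u : Matrix (Fin p) (Fin p) ℂ, IsUnit u ∧
      A' = u * A ∧ B' = (u⁻¹)ᵀ * B := by
  have hker : LinearMap.ker A.mulVecLin = LinearMap.ker A'.mulVecLin := by
    rw [A.ker_mulVecLin_eq_bot_of_rank_eq (by rw [hA, Fintype.card_fin]),
      A'.ker_mulVecLin_eq_bot_of_rank_eq (by rw [hA', Fintype.card_fin])]
  have hsurj : ∀ M : Matrix (Fin p) (Fin n₂) ℂ, M.rank = n₂ → Surjective Mᵀ.mulVecLin :=
    fun M hM => Mᵀ.mulVecLin_surjective_of_rank_eq (by rw [rank_transpose, hM, Fintype.card_fin])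
  have hcomp : B'ᵀ.mulVecLin ∘ₗ A'.mulVecLin = Bᵀ.mulVecLin ∘ₗ A.mulVecLin := by
    have hBA : B'ᵀ * A' = Bᵀ * A := by
      simpa only [transpose_mul, transpose_transpose] using congr($h.symmᵀ)
    rw [← mulVecLin_mul, ← mulVecLin_mul, hBA]
  obtain ⟨e, hea, hβe⟩ := LinearMap.exists_linearEquiv_comp_eq_of_comp_eq hker (hsurj B hB)
    (hsurj B' hB') hcomp
  set u := LinearMap.toMatrix' e.toLinearMap
  have hu : toLin' u = e := toLin'_toMatrix' _
  have hunit : IsUnit u :=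
    LinearMap.isUnit_toMatrix'_iff.2 ((Module.End.isUnit_iff _).2 e.bijective)
  have hBu : uᵀ * B' = B := by
    apply transpose_injective
    apply toLin'.injective
    rw [transpose_mul, transpose_transpose, toLin'_mul, hu, toLin'_apply', toLin'_apply', hβe]
  refine ⟨u, hunit, ?_, ?_⟩
  · apply toLin'.injective
    rw [toLin'_mul, hu, toLin'_apply', toLin'_apply', hea]
  · rw [← hBu, ← Matrix.mul_assoc, ← transpose_mul,
      mul_nonsing_inv _ ((isUnit_iff_isUnit_det u).1 hunit), transpose_one, Matrix.one_mul]

/-- General-linear analogue of Witt's theorem (Lemma B.2(iii) for the dual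
pair (U(n₁,n₂), U(p,q))): if AᵀB = A'ᵀB' with A, A' of full rank n₁ and
B, B' of full rank n₂, then (A',B') = (u·A, (u⁻¹)ᵀ·B) for some u ∈ GL(p,ℂ). -/
theorem stmt_9 (n₁ n₂ p : ℕ) (hn₁ : 0 < n₁) (hn₂ : 0 < n₂) (hp : 0 < p)
    (hsp : n₁ + n₂ ≤ p)
    (A A' : Matrix (Fin p) (Fin n₁) ℂ) (B B' : Matrix (Fin p) (Fin n₂) ℂ)
    (hA : A.rank = n₁) (hA' : A'.rank = n₁)
    (hB : B.rank = n₂) (hB' : B'.rank = n₂)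
    (h : Aᵀ * B = A'ᵀ * B') :
    ∃ u : Matrix (Fin p) (Fin p) ℂ, IsUnit u ∧
      A' = u * A ∧ B' = (u⁻¹)ᵀ * B :=
  stmt_9_general n₁ n₂ p A A' B B' hA hA' hB hB' h
end
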